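/- arXiv:2407.11411 — 3 statements merged into one kernel-verified Lean document; each statement's English description precedes it below -/
import Mathlib

section
/- Let r, s ≥ 3 be integers, both odd. If the pair (Γ₂(r,s), G₂(r,s)) is basic of cycle type, then r and s are both odd primes. -/
/-! If `r` has a divisor `a` with `3 ≤ a < r` (as every odd composite `r` does), the translations
by the multiples of `(a, 0)` form a normal subgroup of `G₂(r,s)`: `μ` and `ν` commute with them and
`σ`, `τ` invert or fix them. In the corresponding normal quotient the orbit of `(0,0)₀` is adjacent
to the three distinct orbits of `(1,1)₁`, `(1,-1)₁` and `(-1,1)₁`, so the quotient has more than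
two vertices and is not a cycle, and the pair is not basic. The same works for `s` with `(0, b)`. -/

open SimpleGraph

namespace OG4

variable {V : Type*} {W : Type*}

/-! ### Normal quotients, cycles, and basic pairs -/

/-- The setoid of orbits of a group `N` of permutations of `V`. -/
def orbitSetoid (N : Subgroup (Equiv.Perm V)) : Setoid V := MulAction.orbitRel N V

/-- The (normal) quotient graph of a graph `Γ` with respect to a group `N` of permutations:
its vertices are the `N`-orbits, two distinct orbits being adjacent iff some vertex of one is
adjacent in `Γ` to some vertex of the other. -/
def quotientGraph (Γ : SimpleGraph V) (N : Subgroup (Equiv.Perm V)) :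
    SimpleGraph (Quotient (orbitSetoid N)) :=
  SimpleGraph.fromRel fun a b =>
    ∃ x y : V, Quotient.mk (orbitSetoid N) x = a ∧ Quotient.mk (orbitSetoid N) y = b ∧ Γ.Adj x y

/-- `N` is a normal subgroup of the subgroup `G` (of some ambient group). -/
def NormalIn {G : Type*} [Group G] (N H : Subgroup G) : Prop :=
  N ≤ H ∧ ∀ h ∈ H, ∀ n ∈ N, h * n * h⁻¹ ∈ N

/-- A graph is isomorphic to a cycle graph `C_m` for some `m ≥ 3`. -/
def IsoCycle (Δ : SimpleGraph W) : Prop :=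
  ∃ m : ℕ, 3 ≤ m ∧ Nonempty (Δ ≃g SimpleGraph.cycleGraph m)

/-- Every normal quotient of `(Γ, G)` relative to a nontrivial normal subgroup is degenerate:
it has at most 2 vertices or is a cycle. -/
def IsBasic (Γ : SimpleGraph V) (G : Subgroup (Equiv.Perm V)) : Prop :=
  ∀ N : Subgroup (Equiv.Perm V), NormalIn N G → N ≠ ⊥ →
    Nat.card (Quotient (orbitSetoid N)) ≤ 2 ∨ IsoCycle (quotientGraph Γ N)

/-- `(Γ, G)` is basic of cycle type. -/
def BasicOfCycleType (Γ : SimpleGraph V) (G : Subgroup (Equiv.Perm V)) : Prop :=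
  IsBasic Γ G ∧
    ∃ N : Subgroup (Equiv.Perm V), NormalIn N G ∧ N ≠ ⊥ ∧ IsoCycle (quotientGraph Γ N)

/-- The kernel of the action of `G` on the set of `N`-orbits. -/
def orbitKernel (G N : Subgroup (Equiv.Perm V)) : Subgroup (Equiv.Perm V) where
  carrier := {g | g ∈ G ∧ ∀ x : V,
    Quotient.mk (orbitSetoid N) (g x) = Quotient.mk (orbitSetoid N) x}
  one_mem' := ⟨G.one_mem, fun x => by simp⟩
  mul_mem' := by
    rintro a b ⟨haG, ha⟩ ⟨hbG, hb⟩
    refine ⟨G.mul_mem haG hbG, fun x => ?_⟩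
    rw [Equiv.Perm.mul_apply, ha (b x), hb x]
  inv_mem' := by
    rintro a ⟨haG, ha⟩
    refine ⟨G.inv_mem haG, fun x => ?_⟩
    have h := ha (a⁻¹ x)
    rw [show a (a⁻¹ x) = x from a.apply_symm_apply x] at h
    exact h.symm

/-- `(Γ, G)` has a pair of independent cyclic normal quotients. -/
def HasIndepCyclicQuotients (Γ : SimpleGraph V) (G : Subgroup (Equiv.Perm V)) : Prop :=
  ∃ N M : Subgroup (Equiv.Perm V), NormalIn N G ∧ NormalIn M G ∧
    IsoCycle (quotientGraph Γ N) ∧ IsoCycle (quotientGraph Γ M) ∧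
    ¬ IsoCycle (quotientGraph Γ (orbitKernel G N ⊓ orbitKernel G M))

/-- `(Γ, G)` is basic of independent-cycle type. -/
def BasicOfIndependentCycleType (Γ : SimpleGraph V) (G : Subgroup (Equiv.Perm V)) : Prop :=
  IsBasic Γ G ∧ HasIndepCyclicQuotients Γ G

/-- Isomorphism of graph-group pairs: a graph isomorphism conjugating one group onto the other. -/
def PairIso (Γ : SimpleGraph V) (G : Subgroup (Equiv.Perm V))
    (Δ : SimpleGraph W) (H : Subgroup (Equiv.Perm W)) : Prop :=
  ∃ e : Γ ≃g Δ, ∀ h : Equiv.Perm W, h ∈ H ↔ ∃ g ∈ G, e.toEquiv.permCongr g = h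

/-! ### Minimal normal subgroups -/

/-- `M` is a minimal normal subgroup of the ambient group. -/
def IsMinimalNormal {G : Type*} [Group G] (M : Subgroup G) : Prop :=
  M.Normal ∧ M ≠ ⊥ ∧ ∀ N : Subgroup G, N.Normal → N ≤ M → N = ⊥ ∨ N = M

/-- `M` is a minimal normal subgroup of the subgroup `H`. -/
def IsMinimalNormalIn {G : Type*} [Group G] (M H : Subgroup G) : Prop :=
  NormalIn M H ∧ M ≠ ⊥ ∧ ∀ N : Subgroup G, NormalIn N H → N ≤ M → N = ⊥ ∨ N = M

/-! ### The graphs `Γ(r,s)` and their automorphisms -/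

/-- In `Γ(r,s)`, the vertex `(i,j)` is joined to the four vertices `(i ± 1, j ± 1)`. -/
def gammaRel (r s : ℕ) (x y : ZMod r × ZMod s) : Prop :=
  (y.1 = x.1 + 1 ∨ y.1 = x.1 - 1) ∧ (y.2 = x.2 + 1 ∨ y.2 = x.2 - 1)

/-- The graph `Γ(r,s)` on `ℤ_r × ℤ_s`. -/
def Gamma (r s : ℕ) : SimpleGraph (ZMod r × ZMod s) := SimpleGraph.fromRel (gammaRel r s)

/-- `μ : (i,j) ↦ (i+1, j)`. -/
def mu (r s : ℕ) : Equiv.Perm (ZMod r × ZMod s) :=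
  (Equiv.addRight (1 : ZMod r)).prodCongr (Equiv.refl (ZMod s))

/-- `ν : (i,j) ↦ (i, j+1)`. -/
def nu (r s : ℕ) : Equiv.Perm (ZMod r × ZMod s) :=
  (Equiv.refl (ZMod r)).prodCongr (Equiv.addRight (1 : ZMod s))

/-- `σ : (i,j) ↦ (-i, j)`. -/
def sigma (r s : ℕ) : Equiv.Perm (ZMod r × ZMod s) :=
  (Equiv.neg (ZMod r)).prodCongr (Equiv.refl (ZMod s))

/-- `τ : (i,j) ↦ (-i, -j)`. -/
def tau (r s : ℕ) : Equiv.Perm (ZMod r × ZMod s) :=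
  (Equiv.neg (ZMod r)).prodCongr (Equiv.neg (ZMod s))

/-- `σν : (i,j) ↦ (-i, j+1)`. -/
def sigmaNu (r s : ℕ) : Equiv.Perm (ZMod r × ZMod s) :=
  (Equiv.neg (ZMod r)).prodCongr (Equiv.addRight (1 : ZMod s))

/-- `μν : (i,j) ↦ (i+1, j+1)`. -/
def muNu (r s : ℕ) : Equiv.Perm (ZMod r × ZMod s) :=
  (Equiv.addRight (1 : ZMod r)).prodCongr (Equiv.addRight (1 : ZMod s))

/-- `σμν : (i,j) ↦ (-(i+1), j+1)`. -/
def sigmaMuNu (r s : ℕ) : Equiv.Perm (ZMod r × ZMod s) :=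
  ((Equiv.addRight (1 : ZMod r)).trans (Equiv.neg (ZMod r))).prodCongr
    (Equiv.addRight (1 : ZMod s))

/-- `μ² : (i,j) ↦ (i+2, j)`. -/
def muSq (r s : ℕ) : Equiv.Perm (ZMod r × ZMod s) :=
  (Equiv.addRight (2 : ZMod r)).prodCongr (Equiv.refl (ZMod s))

/-- `ν² : (i,j) ↦ (i, j+2)`. -/
def nuSq (r s : ℕ) : Equiv.Perm (ZMod r × ZMod s) :=
  (Equiv.refl (ZMod r)).prodCongr (Equiv.addRight (2 : ZMod s))

/-- `μ^k : (i,j) ↦ (i+k, j)`. -/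
def muPow (r s k : ℕ) : Equiv.Perm (ZMod r × ZMod s) :=
  (Equiv.addRight ((k : ZMod r))).prodCongr (Equiv.refl (ZMod s))

/-- `μ^k ν² : (i,j) ↦ (i+k, j+2)`. -/
def muPowNuSq (r s k : ℕ) : Equiv.Perm (ZMod r × ZMod s) :=
  (Equiv.addRight ((k : ZMod r))).prodCongr (Equiv.addRight (2 : ZMod s))

/-- `G(r,s) = ⟨μ, ν, σ⟩`. -/
def Ggroup (r s : ℕ) : Subgroup (Equiv.Perm (ZMod r × ZMod s)) :=
  Subgroup.closure {mu r s, nu r s, sigma r s}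

/-- `H(r,s) = ⟨μ, σν, τ⟩`. -/
def Hgroup (r s : ℕ) : Subgroup (Equiv.Perm (ZMod r × ZMod s)) :=
  Subgroup.closure {mu r s, sigmaNu r s, tau r s}

/-! ### The graphs `Γ⁺(r,s)` (for `r`, `s` even) -/

/-- `X⁺`: the set of `(i,j)` with `i` and `j` of the same parity. -/
def XPlus (r s : ℕ) : Set (ZMod r × ZMod s) := {x | x.1.val % 2 = x.2.val % 2}

/-- `Γ⁺(r,s)`, the subgraph of `Γ(r,s)` induced on `X⁺`. -/
def GammaPlus (r s : ℕ) : SimpleGraph (XPlus r s) :=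
  SimpleGraph.induce (XPlus r s) (Gamma r s)

section parity

lemma val_add_one_mod_two (r : ℕ) (hr : 2 ∣ r) (hr0 : r ≠ 0) (i : ZMod r) :
    (i + 1).val % 2 = (i.val + 1) % 2 := by
  haveI : NeZero r := ⟨hr0⟩
  haveI : Fact (1 < r) := ⟨by have := Nat.le_of_dvd (Nat.pos_of_ne_zero hr0) hr; omega⟩
  rw [ZMod.val_add, Nat.mod_mod_of_dvd _ hr, ZMod.val_one]

lemma val_add_two_mod_two (r : ℕ) (hr : 2 ∣ r) (hr0 : r ≠ 0) (i : ZMod r) :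
    (i + 2).val % 2 = i.val % 2 := by
  have h1 := val_add_one_mod_two r hr hr0 i
  have h2 := val_add_one_mod_two r hr hr0 (i + 1)
  rw [show i + 1 + 1 = i + 2 by ring] at h2
  omega

lemma val_neg_mod_two (r : ℕ) (hr : 2 ∣ r) (hr0 : r ≠ 0) (i : ZMod r) :
    (-i).val % 2 = i.val % 2 := by
  haveI : NeZero r := ⟨hr0⟩
  rcases eq_or_ne i 0 with h | h
  · simp [h]
  · have h1 : (-i).val = r - i.val := by rw [ZMod.neg_val]; simp [h]
    have h2 : i.val < r := ZMod.val_lt i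
    have h3 : i.val ≠ 0 := fun hh => h ((ZMod.val_eq_zero i).mp hh)
    obtain ⟨t, rfl⟩ := hr
    rw [h1]
    omega

end parity

section plusPerms

variable (r s : ℕ)

/-- The restriction of `μ²` to `X⁺`. -/
def muSqP (hr : 2 ∣ r) (hr0 : r ≠ 0) : Equiv.Perm (XPlus r s) :=
  (muSq r s).subtypePerm (by
    intro x
    have h := val_add_two_mod_two r hr hr0 x.1
    simp only [XPlus, Set.mem_setOf_eq, muSq, Equiv.prodCongr_apply, Prod.map,
      Equiv.coe_addRight, Equiv.refl_apply]
    omega)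

/-- The restriction of `ν²` to `X⁺`. -/
def nuSqP (hs : 2 ∣ s) (hs0 : s ≠ 0) : Equiv.Perm (XPlus r s) :=
  (nuSq r s).subtypePerm (by
    intro x
    have h := val_add_two_mod_two s hs hs0 x.2
    simp only [XPlus, Set.mem_setOf_eq, nuSq, Equiv.prodCongr_apply, Prod.map,
      Equiv.coe_addRight, Equiv.refl_apply]
    omega)

/-- The restriction of `μν` to `X⁺`. -/
def muNuP (hr : 2 ∣ r) (hr0 : r ≠ 0) (hs : 2 ∣ s) (hs0 : s ≠ 0) : Equiv.Perm (XPlus r s) :=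
  (muNu r s).subtypePerm (by
    intro x
    have h1 := val_add_one_mod_two r hr hr0 x.1
    have h2 := val_add_one_mod_two s hs hs0 x.2
    simp only [XPlus, Set.mem_setOf_eq, muNu, Equiv.prodCongr_apply, Prod.map,
      Equiv.coe_addRight]
    omega)

/-- The restriction of `σ` to `X⁺`. -/
def sigmaP (hr : 2 ∣ r) (hr0 : r ≠ 0) : Equiv.Perm (XPlus r s) :=
  (sigma r s).subtypePerm (by
    intro x
    have h := val_neg_mod_two r hr hr0 x.1
    simp only [XPlus, Set.mem_setOf_eq, sigma, Equiv.prodCongr_apply, Prod.map,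
      Equiv.neg_apply, Equiv.refl_apply]
    omega)

/-- The restriction of `τ` to `X⁺`. -/
def tauP (hr : 2 ∣ r) (hr0 : r ≠ 0) (hs : 2 ∣ s) (hs0 : s ≠ 0) : Equiv.Perm (XPlus r s) :=
  (tau r s).subtypePerm (by
    intro x
    have h1 := val_neg_mod_two r hr hr0 x.1
    have h2 := val_neg_mod_two s hs hs0 x.2
    simp only [XPlus, Set.mem_setOf_eq, tau, Equiv.prodCongr_apply, Prod.map,
      Equiv.neg_apply]
    omega)

/-- The restriction of `σμν` to `X⁺`. -/
def sigmaMuNuP (hr : 2 ∣ r) (hr0 : r ≠ 0) (hs : 2 ∣ s) (hs0 : s ≠ 0) :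
    Equiv.Perm (XPlus r s) :=
  (sigmaMuNu r s).subtypePerm (by
    intro x
    have h1 := val_neg_mod_two r hr hr0 (x.1 + 1)
    have h2 := val_add_one_mod_two r hr hr0 x.1
    have h3 := val_add_one_mod_two s hs hs0 x.2
    simp only [XPlus, Set.mem_setOf_eq, sigmaMuNu, Equiv.prodCongr_apply, Prod.map,
      Equiv.trans_apply, Equiv.coe_addRight, Equiv.neg_apply]
    omega)

/-- `G⁺(r,s) = ⟨μ², μν, σ⟩` acting on `X⁺`. -/
def GPlusGroup (hr : 2 ∣ r) (hr0 : r ≠ 0) (hs : 2 ∣ s) (hs0 : s ≠ 0) :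
    Subgroup (Equiv.Perm (XPlus r s)) :=
  Subgroup.closure {muSqP r s hr hr0, muNuP r s hr hr0 hs hs0, sigmaP r s hr hr0}

/-- `H⁺(r,s) = ⟨μ², σμν, τ⟩` acting on `X⁺`. -/
def HPlusGroup (hr : 2 ∣ r) (hr0 : r ≠ 0) (hs : 2 ∣ s) (hs0 : s ≠ 0) :
    Subgroup (Equiv.Perm (XPlus r s)) :=
  Subgroup.closure
    {muSqP r s hr hr0, sigmaMuNuP r s hr hr0 hs hs0, tauP r s hr hr0 hs hs0}

end plusPerms

/-! ### The standard double cover `Γ₂(r,s)` -/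

/-- Adjacency of the double cover: `(i,j)_δ ~ (i ± 1, j ± 1)_{δ+1}`. -/
def gamma2Rel (r s : ℕ) (x y : (ZMod r × ZMod s) × ZMod 2) : Prop :=
  (y.1.1 = x.1.1 + 1 ∨ y.1.1 = x.1.1 - 1) ∧ (y.1.2 = x.1.2 + 1 ∨ y.1.2 = x.1.2 - 1) ∧
    y.2 = x.2 + 1

/-- `Γ₂(r,s)`, the standard double cover of `Γ(r,s)`. -/
def Gamma2 (r s : ℕ) : SimpleGraph ((ZMod r × ZMod s) × ZMod 2) :=
  SimpleGraph.fromRel (gamma2Rel r s)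

/-- `μ : (i,j)_δ ↦ (i+1, j)_δ` on the double cover. -/
def muD (r s : ℕ) : Equiv.Perm ((ZMod r × ZMod s) × ZMod 2) :=
  (mu r s).prodCongr (Equiv.refl (ZMod 2))

/-- `ν : (i,j)_δ ↦ (i, j+1)_δ` on the double cover. -/
def nuD (r s : ℕ) : Equiv.Perm ((ZMod r × ZMod s) × ZMod 2) :=
  (nu r s).prodCongr (Equiv.refl (ZMod 2))

/-- `σ : (i,j)_δ ↦ (i, -j)_{δ+1}` on the double cover. -/
def sigmaD (r s : ℕ) : Equiv.Perm ((ZMod r × ZMod s) × ZMod 2) :=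
  ((Equiv.refl (ZMod r)).prodCongr (Equiv.neg (ZMod s))).prodCongr
    (Equiv.addRight (1 : ZMod 2))

/-- `τ : (i,j)_δ ↦ (-i, -j)_δ` on the double cover. -/
def tauD (r s : ℕ) : Equiv.Perm ((ZMod r × ZMod s) × ZMod 2) :=
  (tau r s).prodCongr (Equiv.refl (ZMod 2))

/-- `G₂(r,s) = ⟨μ, ν, σ, τ⟩` on the double cover. -/
def G2group (r s : ℕ) : Subgroup (Equiv.Perm ((ZMod r × ZMod s) × ZMod 2)) :=
  Subgroup.closure {muD r s, nuD r s, sigmaD r s, tauD r s}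


lemma not_isoCycle_of_three_neighbors {Δ : SimpleGraph W} {v w₁ w₂ w₃ : W}
    (h₁ : Δ.Adj v w₁) (h₂ : Δ.Adj v w₂) (h₃ : Δ.Adj v w₃)
    (h₁₂ : w₁ ≠ w₂) (h₁₃ : w₁ ≠ w₃) (h₂₃ : w₂ ≠ w₃) : ¬ IsoCycle Δ := by
  rintro ⟨m, hm, ⟨e⟩⟩
  obtain ⟨n, rfl⟩ : ∃ n, m = n + 2 := ⟨m - 2, by omega⟩
  have hnbr : ∀ w, Δ.Adj v w → e w = e v - 1 ∨ e w = e v + 1 := fun w hw => by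
    simpa [← mem_neighborSet, cycleGraph_neighborSet] using e.map_adj_iff.2 hw
  have he₁₂ := e.injective.ne h₁₂
  have he₁₃ := e.injective.ne h₁₃
  have he₂₃ := e.injective.ne h₂₃
  rcases hnbr _ h₁ with he₁ | he₁ <;> rcases hnbr _ h₂ with he₂ | he₂ <;>
    rcases hnbr _ h₃ with he₃ | he₃ <;> simp_all

lemma quotientGraph_adj_mk {Γ : SimpleGraph V} {N : Subgroup (Equiv.Perm V)} {x y : V}
    (hadj : Γ.Adj x y) (hne : Quotient.mk (orbitSetoid N) x ≠ Quotient.mk (orbitSetoid N) y) :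
    (quotientGraph Γ N).Adj (Quotient.mk _ x) (Quotient.mk _ y) :=
  ⟨hne, Or.inl ⟨x, y, rfl, rfl, hadj⟩⟩

lemma not_isBasic_of_three_neighbors [Finite V] {Γ : SimpleGraph V}
    {G N : Subgroup (Equiv.Perm V)} (hN : NormalIn N G) (hN₁ : N ≠ ⊥) {v w₁ w₂ w₃ : V}
    (h₁ : Γ.Adj v w₁) (h₂ : Γ.Adj v w₂) (h₃ : Γ.Adj v w₃)
    (hv₁ : Quotient.mk (orbitSetoid N) v ≠ Quotient.mk _ w₁)
    (hv₂ : Quotient.mk (orbitSetoid N) v ≠ Quotient.mk _ w₂)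
    (hv₃ : Quotient.mk (orbitSetoid N) v ≠ Quotient.mk _ w₃)
    (h₁₂ : Quotient.mk (orbitSetoid N) w₁ ≠ Quotient.mk _ w₂)
    (h₁₃ : Quotient.mk (orbitSetoid N) w₁ ≠ Quotient.mk _ w₃)
    (h₂₃ : Quotient.mk (orbitSetoid N) w₂ ≠ Quotient.mk _ w₃) :
    ¬ IsBasic Γ G := by
  intro hbasic
  rcases hbasic N hN hN₁ with hcard | hcycle
  · have hthree : 3 ≤ Nat.card (Quotient (orbitSetoid N)) := by
      classical
      have := Fintype.ofFinite (Quotient (orbitSetoid N))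
      have := Finset.card_le_univ ({Quotient.mk _ w₁, Quotient.mk _ w₂, Quotient.mk _ w₃} :
        Finset (Quotient (orbitSetoid N)))
      rw [Finset.card_insert_of_notMem (by simp [h₁₂, h₁₃]),
        Finset.card_pair h₂₃, ← Nat.card_eq_fintype_card] at this
      exact this
    omega
  · exact not_isoCycle_of_three_neighbors (quotientGraph_adj_mk h₁ hv₁)
      (quotientGraph_adj_mk h₂ hv₂) (quotientGraph_adj_mk h₃ hv₃) h₁₂ h₁₃ h₂₃ hcycle

lemma normalIn_zpowers_closure {G : Type*} [Group G] {S : Set G} {t : G}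
    (ht : t ∈ Subgroup.closure S) (hS : ∀ g ∈ S, g * t * g⁻¹ = t ∨ g * t * g⁻¹ = t⁻¹) :
    NormalIn (Subgroup.zpowers t) (Subgroup.closure S) := by
  have hle : Subgroup.closure S ≤ Subgroup.normalizer (Subgroup.zpowers t : Set G) := by
    refine (Subgroup.closure_le _).2 fun g hg => ?_
    rw [SetLike.mem_coe, Subgroup.mem_normalizer_iff_map_conj_eq, MonoidHom.map_zpowers]
    rcases hS g hg with h | h <;> simp [MulAut.conj_apply, h]
  refine ⟨Subgroup.zpowers_le.2 ht, fun g hg n hn => ?_⟩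
  exact (Subgroup.mem_normalizer_iff.1 (hle hg) n).1 hn

section DoubleCover

variable {r s : ℕ}

def translate (c : ZMod r × ZMod s) : Equiv.Perm ((ZMod r × ZMod s) × ZMod 2) :=
  (Equiv.addRight c).prodCongr (Equiv.refl (ZMod 2))

@[simp]
lemma translate_apply (c : ZMod r × ZMod s) (x : (ZMod r × ZMod s) × ZMod 2) :
    translate c x = (x.1 + c, x.2) := rfl

lemma translate_add (c d : ZMod r × ZMod s) :
    translate (c + d) = translate c * translate d := by
  ext x <;> simp [add_assoc, add_comm c d]

lemma translate_neg (c : ZMod r × ZMod s) : translate (-c) = (translate c)⁻¹ := by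
  refine eq_inv_of_mul_eq_one_left ?_
  rw [← translate_add, neg_add_cancel]
  ext x <;> simp

lemma translate_zsmul (c : ZMod r × ZMod s) (k : ℤ) : translate (k • c) = translate c ^ k := by
  induction k using Int.induction_on with
  | zero => ext x <;> simp
  | succ k ih => rw [add_smul, one_smul, translate_add, ih, zpow_add_one]
  | pred k ih => rw [sub_smul, one_smul, sub_eq_add_neg, translate_add, ih, translate_neg,
      zpow_sub_one]

lemma muD_eq_translate : muD r s = translate (1, 0) := by
  ext x <;> simp [muD, mu]

lemma nuD_eq_translate : nuD r s = translate (0, 1) := by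
  ext x <;> simp [nuD, nu]

lemma sigmaD_mul_translate (c : ZMod r × ZMod s) :
    sigmaD r s * translate c = translate (c.1, -c.2) * sigmaD r s := by
  ext x <;> simp [sigmaD, add_comm]

lemma tauD_mul_translate (c : ZMod r × ZMod s) :
    tauD r s * translate c = translate (-c) * tauD r s := by
  ext x <;> simp [tauD, tau, add_comm]

lemma translate_mem_G2group (c : ZMod r × ZMod s) : translate c ∈ G2group r s := by
  obtain ⟨a, b⟩ := c
  have hc : ((a, b) : ZMod r × ZMod s) = (a.cast : ℤ) • (1, 0) + (b.cast : ℤ) • (0, 1) := by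
    simp
  rw [hc, translate_add, translate_zsmul, translate_zsmul, ← muD_eq_translate,
    ← nuD_eq_translate]
  exact mul_mem (zpow_mem (Subgroup.subset_closure (by simp)) _)
    (zpow_mem (Subgroup.subset_closure (by simp)) _)

lemma translate_commute (c d : ZMod r × ZMod s) : Commute (translate c) (translate d) := by
  rw [Commute, SemiconjBy, ← translate_add, ← translate_add, add_comm]

lemma normalIn_zpowers_translate {c : ZMod r × ZMod s}
    (hc : (c.1, -c.2) = c ∨ (c.1, -c.2) = -c) :
    NormalIn (Subgroup.zpowers (translate c)) (G2group r s) := by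
  refine normalIn_zpowers_closure (translate_mem_G2group c) ?_
  simp only [Set.mem_insert_iff, Set.mem_singleton_iff]
  rintro g (rfl | rfl | rfl | rfl)
  · exact .inl (mul_inv_eq_of_eq_mul (muD_eq_translate ▸ translate_commute _ c))
  · exact .inl (mul_inv_eq_of_eq_mul (nuD_eq_translate ▸ translate_commute _ c))
  · rw [mul_inv_eq_of_eq_mul (sigmaD_mul_translate c), ← translate_neg]
    rcases hc with h | h <;> rw [h] <;> simp
  · exact .inr (by rw [mul_inv_eq_of_eq_mul (tauD_mul_translate c), translate_neg])

lemma sub_mem_zmultiples_of_mk_eq_mk {c : ZMod r × ZMod s} {x y : (ZMod r × ZMod s) × ZMod 2}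
    (h : Quotient.mk (orbitSetoid (Subgroup.zpowers (translate c))) x = Quotient.mk _ y) :
    x.1 - y.1 ∈ AddSubgroup.zmultiples c ∧ x.2 = y.2 := by
  obtain ⟨⟨_, k, rfl⟩, rfl⟩ := Quotient.exact h
  simp [← translate_zsmul]

lemma gamma2_adj_zero {i : ZMod r} {j : ZMod s} (hi : i = 1 ∨ i = -1) (hj : j = 1 ∨ j = -1) :
    (Gamma2 r s).Adj ((0, 0), 0) ((i, j), 1) := by
  exact (fromRel_adj _ _ _).2 ⟨by simp, .inl ⟨by simpa using hi, by simpa using hj, rfl⟩⟩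

/-- Witnesses: the neighbours `(1,1)₁`, `(1,-1)₁`, `(-1,1)₁` of `(0,0)₀`, whose pairwise
differences are `(0,2)`, `(2,0)` and `(2,-2)`. -/
lemma not_isBasic_of_translate [NeZero r] [NeZero s] {c : ZMod r × ZMod s} (hc₀ : c ≠ 0)
    (hc : (c.1, -c.2) = c ∨ (c.1, -c.2) = -c)
    (h₀₂ : ((0 : ZMod r), (2 : ZMod s)) ∉ AddSubgroup.zmultiples c)
    (h₂₀ : ((2 : ZMod r), (0 : ZMod s)) ∉ AddSubgroup.zmultiples c)
    (h₂₂ : ((2 : ZMod r), (-2 : ZMod s)) ∉ AddSubgroup.zmultiples c) :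
    ¬ IsBasic (Gamma2 r s) (G2group r s) := by
  have hne : Subgroup.zpowers (translate c) ≠ ⊥ := by
    rw [Ne, Subgroup.zpowers_eq_bot]
    intro h
    exact hc₀ (by simpa using congrArg (fun g => (g ((0, 0), 0)).1) h)
  have h01 : (0 : ZMod 2) ≠ 1 := by decide
  refine not_isBasic_of_three_neighbors (normalIn_zpowers_translate hc) hne
    (gamma2_adj_zero (.inl rfl) (.inl rfl)) (gamma2_adj_zero (.inl rfl) (.inr rfl))
    (gamma2_adj_zero (.inr rfl) (.inl rfl))
    (fun h => h01 (sub_mem_zmultiples_of_mk_eq_mk h).2)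
    (fun h => h01 (sub_mem_zmultiples_of_mk_eq_mk h).2)
    (fun h => h01 (sub_mem_zmultiples_of_mk_eq_mk h).2) (fun h => h₀₂ ?_) (fun h => h₂₀ ?_)
    (fun h => h₂₂ ?_) <;> convert (sub_mem_zmultiples_of_mk_eq_mk h).1 using 1 <;> ext <;>
    simp only [Prod.fst_sub, Prod.snd_sub] <;> ring

end DoubleCover

lemma Nat.exists_three_le_dvd_lt_of_odd_not_prime {m : ℕ} (hm : 3 ≤ m) (hodd : Odd m)
    (hp : ¬ m.Prime) : ∃ a, 3 ≤ a ∧ a ∣ m ∧ a < m := by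
  refine ⟨m.minFac, ?_, m.minFac_dvd, (Nat.not_prime_iff_minFac_lt (by omega)).1 hp⟩
  have h₂ := (Nat.minFac_prime (by omega : m ≠ 1)).two_le
  have h₂' := hodd.ne_two_of_dvd_nat m.minFac_dvd
  omega

lemma ZMod.two_ne_zero_of_three_le {n : ℕ} (hn : 3 ≤ n) : (2 : ZMod n) ≠ 0 := by
  rw [← Nat.cast_ofNat, Ne, ZMod.natCast_eq_zero_iff]
  exact fun h => absurd (Nat.le_of_dvd two_pos h) (by omega)

lemma ZMod.two_notMem_zmultiples_natCast {a r : ℕ} (ha : 3 ≤ a) (har : a ∣ r) :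
    (2 : ZMod r) ∉ AddSubgroup.zmultiples (a : ZMod r) := by
  rintro ⟨k, hk⟩
  have h := congrArg (ZMod.castHom har (ZMod a)) hk
  rw [map_zsmul, map_natCast, map_ofNat, ZMod.natCast_self, smul_zero] at h
  exact ZMod.two_ne_zero_of_three_le ha h.symm

lemma ZMod.natCast_ne_zero_of_lt {a n : ℕ} (ha : 0 < a) (hlt : a < n) : (a : ZMod n) ≠ 0 := by
  rw [Ne, ZMod.natCast_eq_zero_iff]
  exact fun h => absurd (Nat.le_of_dvd ha h) (by omega)

section Prod

variable {A B : Type*} [AddGroup A] [AddGroup B]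

lemma mem_zmultiples_prod_zero_iff {c : A} {x : A × B} :
    x ∈ AddSubgroup.zmultiples (c, (0 : B)) ↔ x.1 ∈ AddSubgroup.zmultiples c ∧ x.2 = 0 := by
  refine ⟨fun ⟨k, hk⟩ => ⟨⟨k, by simp [← hk]⟩, by simp [← hk]⟩, fun ⟨⟨k, hk⟩, h⟩ => ⟨k, ?_⟩⟩
  ext <;> simp [hk, h]

lemma mem_zmultiples_zero_prod_iff {c : B} {x : A × B} :
    x ∈ AddSubgroup.zmultiples ((0 : A), c) ↔ x.1 = 0 ∧ x.2 ∈ AddSubgroup.zmultiples c := by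
  refine ⟨fun ⟨k, hk⟩ => ⟨by simp [← hk], ⟨k, by simp [← hk]⟩⟩, fun ⟨h, ⟨k, hk⟩⟩ => ⟨k, ?_⟩⟩
  ext <;> simp [hk, h]

end Prod

lemma not_isBasic_of_dvd_left {r s a : ℕ} (hs : 3 ≤ s) (ha : 3 ≤ a) (har : a ∣ r)
    (hlt : a < r) : ¬ IsBasic (Gamma2 r s) (G2group r s) := by
  have : NeZero r := ⟨by omega⟩
  have : NeZero s := ⟨by omega⟩
  have h2 := ZMod.two_ne_zero_of_three_le hs
  refine not_isBasic_of_translate (c := ((a : ZMod r), 0))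
    (by simp [Prod.ext_iff, ZMod.natCast_ne_zero_of_lt (by omega : 0 < a) hlt]) (.inl (by simp))
    ?_ ?_ ?_ <;>
    simp [mem_zmultiples_prod_zero_iff, h2, ZMod.two_notMem_zmultiples_natCast ha har]

lemma not_isBasic_of_dvd_right {r s b : ℕ} (hr : 3 ≤ r) (hb : 3 ≤ b) (hbs : b ∣ s)
    (hlt : b < s) : ¬ IsBasic (Gamma2 r s) (G2group r s) := by
  have : NeZero r := ⟨by omega⟩
  have : NeZero s := ⟨by omega⟩
  have h2 := ZMod.two_ne_zero_of_three_le hr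
  refine not_isBasic_of_translate (c := (0, (b : ZMod s)))
    (by simp [Prod.ext_iff, ZMod.natCast_ne_zero_of_lt (by omega : 0 < b) hlt]) (.inr (by simp))
    ?_ ?_ ?_ <;>
    simp [mem_zmultiples_zero_prod_iff, h2, ZMod.two_notMem_zmultiples_natCast hb hbs]

/-- if `(Γ₂(r,s), G₂(r,s))` (with `r,s ≥ 3` both odd) is basic of cycle type,
then `r` and `s` are both odd primes. -/
theorem stmt4 (r s : ℕ) (hr : 3 ≤ r) (hs : 3 ≤ s) (hro : Odd r) (hso : Odd s)
    (hbasic : BasicOfCycleType (Gamma2 r s) (G2group r s)) :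
    (r.Prime ∧ Odd r) ∧ (s.Prime ∧ Odd s) := by
  have hr' : r.Prime := by
    by_contra hp
    obtain ⟨a, ha, har, hlt⟩ := Nat.exists_three_le_dvd_lt_of_odd_not_prime hr hro hp
    exact not_isBasic_of_dvd_left hs ha har hlt hbasic.1
  have hs' : s.Prime := by
    by_contra hp
    obtain ⟨b, hb, hbs, hlt⟩ := Nat.exists_three_le_dvd_lt_of_odd_not_prime hs hso hp
    exact not_isBasic_of_dvd_right hr hb hbs hlt hbasic.1
  exact ⟨⟨hr', hro⟩, ⟨hs', hso⟩⟩

end OG4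
end

section
/- Let (r,s) be one of (4,p), (p,4), or (p,q), where p and q are odd primes (not necessarily distinct). Then for every nontrivial normal subgroup L of G(r,s), the normal quotient Γ(r,s)_L either has at most 2 vertices or is isomorphic to a cycle graph C_m for some m ≥ 3; moreover the normal quotient of Γ(r,s) by ⟨ν⟩ is isomorphic to the cycle C_r and the normal quotient by ⟨μ⟩ is isomorphic to the cycle C_s. In particular, (Γ(r,s), G(r,s)) is basic of cycle type. -/
open SimpleGraph

namespace OG4

variable {V : Type*} {W : Type*}

/-!
The translations of `ℤ_r × ℤ_s` lie in `G(r,s)`, so the orbits of a normal subgroup `L` are the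
cosets of a subgroup `P` of `ℤ_r × ℤ_s`, and `P` is stable under `σ`. As `2` is invertible modulo
`r` or modulo `s`, this forces `P = A × B`, where `A` and `B` are the kernels of reduction modulo
some `d ∣ r` and `e ∣ s`. For `r, s ∈ {4} ∪ {odd primes}`, not both `4`, and `L ≠ 1`, one of
`d, e` divides `2` and they are coprime; the Chinese remainder map `ℤ_r × ℤ_s → ℤ_{de}` then has
the `L`-orbits as fibres and sends each step `(±1, ±1)` of `Γ(r,s)` to `±1`, so `Γ(r,s)_L` is the
cycle `C_{de}`, or has at most `2` vertices.
-/

section Orbits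

variable {N : Subgroup (Equiv.Perm V)}

lemma mk_eq_mk_iff {x y : V} :
    Quotient.mk (orbitSetoid N) x = Quotient.mk (orbitSetoid N) y ↔ ∃ g ∈ N, g y = x := by
  rw [Quotient.eq]
  exact ⟨fun ⟨g, hg⟩ => ⟨g, g.2, hg⟩, fun ⟨g, hgN, hg⟩ => ⟨⟨g, hgN⟩, hg⟩⟩

lemma mk_apply_eq_mk_apply {f : Equiv.Perm V} (hf : ∀ g ∈ N, f * g * f⁻¹ ∈ N) {x y : V}
    (h : Quotient.mk (orbitSetoid N) x = Quotient.mk (orbitSetoid N) y) :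
    Quotient.mk (orbitSetoid N) (f x) = Quotient.mk (orbitSetoid N) (f y) := by
  obtain ⟨g, hgN, rfl⟩ := mk_eq_mk_iff.mp h
  exact mk_eq_mk_iff.mpr ⟨f * g * f⁻¹, hf g hgN, by simp [Equiv.Perm.mul_apply]⟩

lemma eq_bot_of_mk_injective (h : Function.Injective (Quotient.mk (orbitSetoid N))) : N = ⊥ := by
  refine (Subgroup.eq_bot_iff_forall N).mpr fun g hg => Equiv.ext fun x => h ?_
  exact mk_eq_mk_iff.mpr ⟨g, hg, rfl⟩

noncomputable def orbitEquivOfFibers (f : V → W) (hf : Function.Surjective f)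
    (hfib : ∀ x y, Quotient.mk (orbitSetoid N) x = Quotient.mk (orbitSetoid N) y ↔ f x = f y) :
    Quotient (orbitSetoid N) ≃ W :=
  (Quotient.congrRight fun x y => (Quotient.eq.symm.trans (hfib x y))).trans
    (Setoid.quotientKerEquivOfSurjective f hf)

lemma quotientGraph_iso_of_fibers {Γ : SimpleGraph V} {Δ : SimpleGraph W} (f : V → W)
    (hf : Function.Surjective f)
    (hfib : ∀ x y, Quotient.mk (orbitSetoid N) x = Quotient.mk (orbitSetoid N) y ↔ f x = f y)
    (hΔ : ∀ w w', Δ.Adj w w' ↔ w ≠ w' ∧ ∃ x y, f x = w ∧ f y = w' ∧ Γ.Adj x y) :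
    Nonempty (quotientGraph Γ N ≃g Δ) := by
  refine ⟨⟨orbitEquivOfFibers f hf hfib, fun {a b} => ?_⟩⟩
  induction a using Quotient.inductionOn with | _ x =>
  induction b using Quotient.inductionOn with | _ y =>
  change Δ.Adj (f x) (f y) ↔ _
  simp only [quotientGraph, SimpleGraph.fromRel_adj, Ne, hfib, hΔ]
  refine and_congr_right fun _ => (or_iff_left_of_imp ?_).symm
  rintro ⟨y', x', hy', hx', hadj⟩
  exact ⟨x', y', hx', hy', hadj.symm⟩

end Orbits

section Periods

variable [AddCommGroup V] {N : Subgroup (Equiv.Perm V)}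

def orbitPeriods (N : Subgroup (Equiv.Perm V)) : AddSubgroup V where
  carrier := {v | ∀ x, Quotient.mk (orbitSetoid N) (x + v) = Quotient.mk _ x}
  zero_mem' x := by rw [add_zero]
  add_mem' {v w} hv hw x := by rw [← add_assoc, hw, hv]
  neg_mem' {v} hv x := by rw [← hv (x + -v), neg_add_cancel_right]

lemma mk_eq_mk_iff_sub_mem_orbitPeriods
    (hN : ∀ v : V, ∀ g ∈ N, Equiv.addRight v * g * (Equiv.addRight v)⁻¹ ∈ N) {x y : V} :
    Quotient.mk (orbitSetoid N) x = Quotient.mk _ y ↔ x - y ∈ orbitPeriods N := by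
  refine ⟨fun h z => ?_, fun h => by simpa using h y⟩
  have := mk_apply_eq_mk_apply (hN (z - y)) h
  simp only [Equiv.coe_addRight, add_sub_cancel] at this
  rwa [add_comm z, sub_add_eq_add_sub, add_sub_assoc]

lemma map_mem_orbitPeriods {f : Equiv.Perm V} (hf : ∀ g ∈ N, f * g * f⁻¹ ∈ N)
    (hadd : ∀ a b, f (a + b) = f a + f b) {v : V} (hv : v ∈ orbitPeriods N) :
    f v ∈ orbitPeriods N := fun x => by
  simpa [hadd] using mk_apply_eq_mk_apply hf (hv (f.symm x))

lemma mk_eq_mk_iff_sub_mem_zmultiples (v : V) {x y : V} :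
    Quotient.mk (orbitSetoid (Subgroup.closure {Equiv.addRight v})) x = Quotient.mk _ y ↔
      x - y ∈ AddSubgroup.zmultiples v := by
  simp only [mk_eq_mk_iff, Subgroup.mem_closure_singleton, AddSubgroup.mem_zmultiples_iff]
  constructor
  · rintro ⟨g, ⟨k, rfl⟩, rfl⟩
    exact ⟨k, by simp [Equiv.zsmul_addRight]⟩
  · rintro ⟨k, hk⟩
    exact ⟨_, ⟨k, rfl⟩, by simp [Equiv.zsmul_addRight, hk]⟩

end Periods

section ZModSubgroups

lemma zmod_mul_mem {n : ℕ} (A : AddSubgroup (ZMod n)) (y : ZMod n) {a : ZMod n}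
    (ha : a ∈ A) : y * a ∈ A := by
  simpa [zsmul_eq_mul] using A.zsmul_mem ha (y.cast : ℤ)

lemma mem_of_isUnit_mul_mem {n : ℕ} (A : AddSubgroup (ZMod n)) {u a : ZMod n}
    (hu : IsUnit u) (ha : u * a ∈ A) : a ∈ A := by
  simpa [← mul_assoc] using zmod_mul_mem A (↑hu.unit⁻¹) ha

lemma isUnit_two_of_odd {n : ℕ} (hn : Odd n) : IsUnit (2 : ZMod n) := by
  exact_mod_cast (ZMod.isUnit_iff_coprime 2 n).mpr (Nat.coprime_two_left.mpr hn)

lemma eq_prod_of_neg_fst_mem {r s : ℕ} (P : AddSubgroup (ZMod r × ZMod s))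
    (hP : ∀ v ∈ P, (-v.1, v.2) ∈ P) (h2 : IsUnit (2 : ZMod r) ∨ IsUnit (2 : ZMod s)) :
    P = (P.comap (AddMonoidHom.inl _ _)).prod (P.comap (AddMonoidHom.inr _ _)) := by
  ext v
  simp only [AddSubgroup.mem_prod, AddSubgroup.mem_comap, AddMonoidHom.inl_apply,
    AddMonoidHom.inr_apply]
  refine ⟨fun hv => ?_, fun ⟨h1, h2⟩ => by simpa using P.add_mem h1 h2⟩
  have hfst : ((2 * v.1, 0) : ZMod r × ZMod s) ∈ P := by
    convert P.sub_mem hv (hP v hv) using 1; ext <;> simp; ring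
  have hsnd : ((0, 2 * v.2) : ZMod r × ZMod s) ∈ P := by
    convert P.add_mem hv (hP v hv) using 1; ext <;> simp; ring
  rcases h2 with hu | hu
  · have h1 : ((v.1, 0) : ZMod r × ZMod s) ∈ P :=
      mem_of_isUnit_mul_mem (P.comap (AddMonoidHom.inl _ _)) hu hfst
    refine ⟨h1, ?_⟩
    convert P.sub_mem hv h1 using 1; ext <;> simp
  · have h2 : ((0, v.2) : ZMod r × ZMod s) ∈ P :=
      mem_of_isUnit_mul_mem (P.comap (AddMonoidHom.inr _ _)) hu hsnd
    refine ⟨?_, h2⟩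
    convert P.sub_mem hv h2 using 1; ext <;> simp

lemma exists_ker_castHom_eq {n : ℕ} [NeZero n] (A : AddSubgroup (ZMod n)) :
    ∃ (d : ℕ) (hd : d ∣ n), ∀ a, a ∈ A ↔ ZMod.castHom hd (ZMod d) a = 0 := by
  have hd : A.index ∣ n := by simpa using A.index_dvd_card
  let K := (ZMod.castHom hd (ZMod A.index)).toAddMonoidHom.ker
  have hKA : K ≤ A := fun a ha => by
    change ZMod.castHom hd (ZMod A.index) a = 0 at ha
    rw [← ZMod.natCast_zmod_val a, map_natCast, ZMod.natCast_eq_zero_iff] at ha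
    obtain ⟨k, hk⟩ := ha
    rw [← ZMod.natCast_zmod_val a, hk, Nat.cast_mul, ← nsmul_eq_mul]
    exact A.nsmul_index_mem _
  have hK : K.index = A.index := by
    rw [AddSubgroup.index_ker, AddMonoidHom.range_eq_top.mpr (ZMod.castHom_surjective hd),
      AddSubgroup.card_top, Nat.card_zmod]
  have hcard : Nat.card K * A.index = Nat.card A * A.index := by
    have h1 := K.card_mul_index
    have h2 := A.card_mul_index
    rw [hK] at h1
    linarith
  have hpos : 0 < A.index := Nat.pos_of_dvd_of_pos hd (Nat.pos_of_neZero n)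
  have hKA' : K = A :=
    AddSubgroup.eq_of_le_of_card_ge hKA (Nat.eq_of_mul_eq_mul_right hpos hcard).ge
  exact ⟨A.index, hd, fun a => (SetLike.ext_iff.mp hKA' a).symm⟩

lemma neg_one_eq_one_of_dvd_two {n : ℕ} (h : n ∣ 2) : (-1 : ZMod n) = 1 := by
  rw [neg_eq_iff_add_eq_zero, one_add_one_eq_two]
  exact_mod_cast (ZMod.natCast_eq_zero_iff 2 n).mpr h

end ZModSubgroups

section Arithmetic

lemma dvd_two_or_eq_of_dvd {n d : ℕ} (hn : n = 4 ∨ n.Prime) (hd : d ∣ n) : d ∣ 2 ∨ d = n := by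
  rcases hn with rfl | hp
  · have := Nat.le_of_dvd (by norm_num) hd
    interval_cases d <;> simp_all
  · rcases hp.eq_one_or_self_of_dvd d hd with rfl | rfl
    exacts [Or.inl (one_dvd 2), Or.inr rfl]

lemma coprime_of_dvd_two {r s d e : ℕ} (hodd : Odd r ∨ Odd s) (hdr : d ∣ r) (hes : e ∣ s)
    (hd2 : d ∣ 2) : Nat.Coprime d e := by
  rcases hodd with hr | hs
  · rw [((Nat.coprime_two_left.mpr hr).coprime_dvd_left hd2).eq_one_of_dvd hdr]
    exact Nat.coprime_one_left e
  · exact ((Nat.coprime_two_left.mpr hs).coprime_dvd_right hes).coprime_dvd_left hd2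

end Arithmetic

section GammaQuotients

variable {r s : ℕ}

lemma gammaRel_symm {x y : ZMod r × ZMod s} (h : gammaRel r s x y) : gammaRel r s y x := by
  have flip : ∀ {n : ℕ} {a b : ZMod n}, (b = a + 1 ∨ b = a - 1) → (a = b + 1 ∨ a = b - 1) :=
    fun h => h.symm.imp (fun h => eq_add_of_sub_eq h.symm) (fun h => eq_sub_of_add_eq h.symm)
  exact ⟨flip h.1, flip h.2⟩

lemma gamma_adj_iff {x y : ZMod r × ZMod s} :
    (Gamma r s).Adj x y ↔ x ≠ y ∧ gammaRel r s x y := by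
  rw [Gamma, SimpleGraph.fromRel_adj, or_iff_left_of_imp gammaRel_symm]

lemma map_sub_eq_one_or_neg_one {R : Type*} [Ring R] (φ : ZMod r × ZMod s →+* R)
    (hφ : φ (1, -1) = 1 ∨ φ (1, -1) = -1) {x y : ZMod r × ZMod s} (h : gammaRel r s x y) :
    φ y - φ x = 1 ∨ φ y - φ x = -1 := by
  rw [← map_sub]
  obtain ⟨h1 | h1, h2 | h2⟩ := h
  · left
    rw [show y - x = 1 by ext <;> simp [h1, h2], map_one]
  · rw [show y - x = (1, -1) by ext <;> simp [h1, h2]]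
    exact hφ
  · rw [show y - x = -(1, -1) by ext <;> simp [h1, h2], map_neg, neg_eq_iff_eq_neg,
      neg_eq_iff_eq_neg, neg_neg]
    exact hφ.symm
  · right
    rw [show y - x = -1 by ext <;> simp [h1, h2], map_neg, map_one]

lemma quotientGraph_gamma_iso_cycleGraph {N : Subgroup (Equiv.Perm (ZMod r × ZMod s))} {m : ℕ}
    (hm : 2 ≤ m) (φ : ZMod r × ZMod s →+* ZMod m) (hφ : φ (1, -1) = 1 ∨ φ (1, -1) = -1)
    (hfib : ∀ x y, Quotient.mk (orbitSetoid N) x = Quotient.mk _ y ↔ φ x = φ y) :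
    Nonempty (quotientGraph (Gamma r s) N ≃g cycleGraph m) := by
  obtain ⟨k, rfl⟩ : ∃ k, m = k + 2 := ⟨m - 2, by omega⟩
  have : Fact (1 < k + 2) := ⟨by omega⟩
  refine quotientGraph_iso_of_fibers (Δ := cycleGraph (k + 2)) φ (ZMod.ringHom_surjective φ)
    hfib fun w w' => ⟨fun h => ⟨(cycleGraph _).ne_of_adj h, ?_⟩, ?_⟩
  · obtain ⟨x, rfl⟩ := ZMod.ringHom_surjective φ w
    obtain ⟨x', rfl⟩ := ZMod.ringHom_surjective φ w'
    change φ x - φ x' = 1 ∨ φ x' - φ x = 1 at h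
    obtain ⟨y, hy, hxy⟩ : ∃ y, φ y = φ x' ∧ gammaRel r s x y := by
      rcases h with h | h
      · exact ⟨x - 1, by rw [map_sub, map_one, ← h, sub_sub_cancel], Or.inr rfl, Or.inr rfl⟩
      · exact ⟨x + 1, by rw [map_add, map_one, ← h, add_sub_cancel], Or.inl rfl, Or.inl rfl⟩
    refine ⟨x, y, rfl, hy, gamma_adj_iff.mpr ⟨?_, hxy⟩⟩
    rintro rfl
    rcases h with h | h <;> rw [hy, sub_self] at h <;> exact zero_ne_one h
  · rintro ⟨-, x, y, rfl, rfl, hxy⟩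
    change φ x - φ y = 1 ∨ φ y - φ x = 1
    rcases map_sub_eq_one_or_neg_one φ hφ (gamma_adj_iff.mp hxy).2 with h | h
    · exact Or.inr h
    · exact Or.inl (by rw [← neg_sub, h, neg_neg])

lemma card_le_two_or_isoCycle_of_castHom {d e : ℕ} {N : Subgroup (Equiv.Perm (ZMod r × ZMod s))}
    (hd : d ∣ r) (he : e ∣ s) (hde : Nat.Coprime d e) (h2 : d ∣ 2 ∨ e ∣ 2)
    (hfib : ∀ x y, Quotient.mk (orbitSetoid N) x = Quotient.mk _ y ↔
      ZMod.castHom hd (ZMod d) x.1 = ZMod.castHom hd (ZMod d) y.1 ∧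
        ZMod.castHom he (ZMod e) x.2 = ZMod.castHom he (ZMod e) y.2) :
    Nat.card (Quotient (orbitSetoid N)) ≤ 2 ∨ IsoCycle (quotientGraph (Gamma r s) N) := by
  let φ : ZMod r × ZMod s →+* ZMod (d * e) := (ZMod.chineseRemainder hde).symm.toRingHom.comp
    ((ZMod.castHom hd (ZMod d)).prodMap (ZMod.castHom he (ZMod e)))
  have hφfib : ∀ x y, Quotient.mk (orbitSetoid N) x = Quotient.mk _ y ↔ φ x = φ y := by
    intro x y
    simp [hfib, φ, Prod.ext_iff]
  by_cases hsmall : d * e ≤ 2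
  · left
    rwa [Nat.card_congr (orbitEquivOfFibers φ (ZMod.ringHom_surjective φ) hφfib), Nat.card_zmod]
  refine Or.inr ⟨d * e, by omega, quotientGraph_gamma_iso_cycleGraph (by omega) φ ?_ hφfib⟩
  have hφ : φ (1, -1) = (ZMod.chineseRemainder hde).symm (1, -1) := by
    change (ZMod.chineseRemainder hde).symm (ZMod.castHom hd (ZMod d) 1, ZMod.castHom he _ (-1)) = _
    rw [map_one, map_neg, map_one]
  rcases h2 with h2 | h2
  · right
    rw [hφ, ← neg_one_eq_one_of_dvd_two h2]
    exact (map_neg _ 1).trans (by rw [map_one])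
  · left
    rw [hφ, neg_one_eq_one_of_dvd_two h2]
    exact map_one _

end GammaQuotients

section GroupG

variable {r s : ℕ}

lemma mu_eq_addRight : mu r s = Equiv.addRight (1, 0) := by
  ext x <;> simp [mu]

lemma nu_eq_addRight : nu r s = Equiv.addRight (0, 1) := by
  ext x <;> simp [nu]

lemma sigma_add (x y : ZMod r × ZMod s) : sigma r s (x + y) = sigma r s x + sigma r s y := by
  ext <;> simp [sigma, add_comm]

lemma sigma_mem_Ggroup : sigma r s ∈ Ggroup r s := Subgroup.subset_closure (by simp)

lemma addRight_mem_Ggroup (v : ZMod r × ZMod s) : Equiv.addRight v ∈ Ggroup r s := by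
  obtain ⟨i, hi⟩ := ZMod.intCast_surjective v.1
  obtain ⟨j, hj⟩ := ZMod.intCast_surjective v.2
  have hv : v = i • ((1, 0) : ZMod r × ZMod s) + j • (0, 1) := by ext <;> simp [hi, hj]
  rw [hv, Equiv.addRight_add, ← Equiv.zsmul_addRight, ← Equiv.zsmul_addRight,
    ← mu_eq_addRight, ← nu_eq_addRight]
  exact mul_mem (zpow_mem (Subgroup.subset_closure (by simp)) _)
    (zpow_mem (Subgroup.subset_closure (by simp)) _)

lemma Ggroup_le_centralizer_nu : Ggroup r s ≤ Subgroup.centralizer {nu r s} := by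
  rw [Ggroup, Subgroup.closure_le]
  rintro g (rfl | rfl | rfl) <;>
    rw [SetLike.mem_coe, Subgroup.mem_centralizer_singleton_iff] <;> ext <;> simp [mu, nu, sigma]

lemma normalIn_closure_nu : NormalIn (Subgroup.closure {nu r s}) (Ggroup r s) := by
  refine ⟨(Subgroup.closure_le _).mpr (Set.singleton_subset_iff.mpr
    (Subgroup.subset_closure (by simp))), fun h hh n hn => ?_⟩
  obtain ⟨k, rfl⟩ := Subgroup.mem_closure_singleton.mp hn
  have hc : Commute h (nu r s) :=
    Subgroup.mem_centralizer_singleton_iff.mp (Ggroup_le_centralizer_nu hh)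
  rwa [(hc.zpow_right k).eq, mul_inv_cancel_right]

lemma closure_nu_ne_bot (hs : 2 ≤ s) : Subgroup.closure {nu r s} ≠ ⊥ := by
  have : Fact (1 < s) := ⟨hs⟩
  rw [← Subgroup.zpowers_eq_closure, Ne, Subgroup.zpowers_eq_bot]
  intro h
  simpa [nu] using congrArg (fun g : Equiv.Perm (ZMod r × ZMod s) => (g (0, 0)).2) h

lemma mk_closure_nu_eq_mk_iff {x y : ZMod r × ZMod s} :
    Quotient.mk (orbitSetoid (Subgroup.closure {nu r s})) x = Quotient.mk _ y ↔ x.1 = y.1 := by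
  rw [nu_eq_addRight, mk_eq_mk_iff_sub_mem_zmultiples, AddSubgroup.mem_zmultiples_iff]
  refine ⟨fun ⟨k, hk⟩ => sub_eq_zero.mp (by simpa using (congrArg Prod.fst hk).symm), fun h => ?_⟩
  exact ⟨((x.2 - y.2).cast : ℤ), by ext <;> simp [h]⟩

lemma mk_closure_mu_eq_mk_iff {x y : ZMod r × ZMod s} :
    Quotient.mk (orbitSetoid (Subgroup.closure {mu r s})) x = Quotient.mk _ y ↔ x.2 = y.2 := by
  rw [mu_eq_addRight, mk_eq_mk_iff_sub_mem_zmultiples, AddSubgroup.mem_zmultiples_iff]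
  refine ⟨fun ⟨k, hk⟩ => sub_eq_zero.mp (by simpa using (congrArg Prod.snd hk).symm), fun h => ?_⟩
  exact ⟨((x.1 - y.1).cast : ℤ), by ext <;> simp [h]⟩

end GroupG

lemma exists_mk_eq_mk_iff_castHom {r s : ℕ} [NeZero r] [NeZero s]
    (h2 : IsUnit (2 : ZMod r) ∨ IsUnit (2 : ZMod s)) {L : Subgroup (Equiv.Perm (ZMod r × ZMod s))}
    (hN : NormalIn L (Ggroup r s)) :
    ∃ (d e : ℕ) (hd : d ∣ r) (he : e ∣ s), ∀ x y, Quotient.mk (orbitSetoid L) x = Quotient.mk _ y ↔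
      ZMod.castHom hd (ZMod d) x.1 = ZMod.castHom hd (ZMod d) y.1 ∧
        ZMod.castHom he (ZMod e) x.2 = ZMod.castHom he (ZMod e) y.2 := by
  have hper : ∀ x y, Quotient.mk (orbitSetoid L) x = Quotient.mk _ y ↔ x - y ∈ orbitPeriods L :=
    fun x y => mk_eq_mk_iff_sub_mem_orbitPeriods fun v g hg => hN.2 _ (addRight_mem_Ggroup v) g hg
  set P := orbitPeriods L
  have hσ : ∀ v ∈ P, (-v.1, v.2) ∈ P := fun v hv =>
    map_mem_orbitPeriods (hN.2 _ sigma_mem_Ggroup) sigma_add hv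
  have hP := eq_prod_of_neg_fst_mem P hσ h2
  obtain ⟨d, hd, hA⟩ := exists_ker_castHom_eq (P.comap (AddMonoidHom.inl _ _))
  obtain ⟨e, he, hB⟩ := exists_ker_castHom_eq (P.comap (AddMonoidHom.inr _ _))
  refine ⟨d, e, hd, he, fun x y => ?_⟩
  rw [hper, hP, AddSubgroup.mem_prod, hA, hB, Prod.fst_sub, Prod.snd_sub, map_sub, map_sub,
    sub_eq_zero, sub_eq_zero]

theorem card_le_two_or_isoCycle_of_normalIn {r s : ℕ} (hr : r = 4 ∨ r.Prime)
    (hs : s = 4 ∨ s.Prime) (hodd : Odd r ∨ Odd s) {L : Subgroup (Equiv.Perm (ZMod r × ZMod s))}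
    (hN : NormalIn L (Ggroup r s)) (hL : L ≠ ⊥) :
    Nat.card (Quotient (orbitSetoid L)) ≤ 2 ∨ IsoCycle (quotientGraph (Gamma r s) L) := by
  have : NeZero r := ⟨by rcases hr with rfl | hp; exacts [four_ne_zero, hp.ne_zero]⟩
  have : NeZero s := ⟨by rcases hs with rfl | hp; exacts [four_ne_zero, hp.ne_zero]⟩
  obtain ⟨d, e, hd, he, hfib⟩ :=
    exists_mk_eq_mk_iff_castHom (hodd.imp isUnit_two_of_odd isUnit_two_of_odd) hN
  rcases dvd_two_or_eq_of_dvd hr hd with hd2 | hdr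
  · exact card_le_two_or_isoCycle_of_castHom hd he (coprime_of_dvd_two hodd hd he hd2)
      (Or.inl hd2) hfib
  rcases dvd_two_or_eq_of_dvd hs he with he2 | hes
  · exact card_le_two_or_isoCycle_of_castHom hd he (coprime_of_dvd_two hodd.symm he hd he2).symm
      (Or.inr he2) hfib
  subst hdr hes
  refine absurd (eq_bot_of_mk_injective fun x y hxy => ?_) hL
  obtain ⟨h1, h2⟩ := (hfib x y).mp hxy
  exact Prod.ext (ZMod.castHom_injective _ h1) (ZMod.castHom_injective _ h2)

/-- for `(r,s)` of the form `(4,p)`, `(p,4)` or `(p,q)` with `p`, `q` odd primes,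
every normal quotient of `(Γ(r,s), G(r,s))` by a nontrivial normal subgroup is degenerate,
the quotient by `⟨ν⟩` is `C_r`, the quotient by `⟨μ⟩` is `C_s`, and the pair is basic of
cycle type. -/
theorem stmt5 (r s : ℕ)
    (h : (r = 4 ∧ s.Prime ∧ Odd s) ∨ (r.Prime ∧ Odd r ∧ s = 4) ∨
      (r.Prime ∧ Odd r ∧ s.Prime ∧ Odd s)) :
    (∀ L : Subgroup (Equiv.Perm (ZMod r × ZMod s)), NormalIn L (Ggroup r s) → L ≠ ⊥ →
      Nat.card (Quotient (orbitSetoid L)) ≤ 2 ∨ IsoCycle (quotientGraph (Gamma r s) L)) ∧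
    Nonempty (quotientGraph (Gamma r s) (Subgroup.closure {nu r s}) ≃g
      SimpleGraph.cycleGraph r) ∧
    Nonempty (quotientGraph (Gamma r s) (Subgroup.closure {mu r s}) ≃g
      SimpleGraph.cycleGraph s) ∧
    BasicOfCycleType (Gamma r s) (Ggroup r s) := by
  obtain ⟨hr, hs, hodd, hr3, hs3⟩ : (r = 4 ∨ r.Prime) ∧ (s = 4 ∨ s.Prime) ∧ (Odd r ∨ Odd s) ∧
      3 ≤ r ∧ 3 ≤ s := by
    rcases h with ⟨rfl, hs, hso⟩ | ⟨hr, hro, rfl⟩ | ⟨hr, hro, hs, hso⟩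
    · exact ⟨Or.inl rfl, Or.inr hs, Or.inr hso, by norm_num, hs.odd_iff.mp hso⟩
    · exact ⟨Or.inr hr, Or.inl rfl, Or.inl hro, hr.odd_iff.mp hro, by norm_num⟩
    · exact ⟨Or.inr hr, Or.inr hs, Or.inl hro, hr.odd_iff.mp hro, hs.odd_iff.mp hso⟩
  have hbasic : IsBasic (Gamma r s) (Ggroup r s) := fun L hN hL =>
    card_le_two_or_isoCycle_of_normalIn hr hs hodd hN hL
  have hν := quotientGraph_gamma_iso_cycleGraph (by omega) (RingHom.fst (ZMod r) (ZMod s))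
    (Or.inl rfl) fun _ _ => mk_closure_nu_eq_mk_iff
  have hμ := quotientGraph_gamma_iso_cycleGraph (by omega) (RingHom.snd (ZMod r) (ZMod s))
    (Or.inr rfl) fun _ _ => mk_closure_mu_eq_mk_iff
  exact ⟨hbasic, hν, hμ, hbasic, _, normalIn_closure_nu, closure_nu_ne_bot (by omega), r, hr3, hν⟩

end OG4
end

section
/- Let r = p and s = q where p and q are odd primes (not necessarily distinct). Then for every nontrivial normal subgroup L of G₂(p,q), the normal quotient Γ₂(p,q)_L either has at most 2 vertices or is isomorphic to a cycle graph C_m for some m ≥ 3; moreover the normal quotient of Γ₂(p,q) by ⟨μ⟩ is isomorphic to the cycle C_{2q} and the normal quotient by ⟨ν⟩ is isomorphic to the cycle C_{2p}. In particular, (Γ₂(p,q), G₂(p,q)) is basic of cycle type. -/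
open SimpleGraph

namespace OG4

variable {V : Type*} {W : Type*}

/-! Every element of `G₂(p,q)` acts as `(i,j)_δ ↦ (±i + a, ±j + b)_{δ+c}`, with `c = 1` exactly
when the two signs differ. Let `L ⊴ G₂` be nontrivial. If some element `g ∈ L` moves the first
coordinate, then `μ ∈ L`: if `g` is a reflection `i ↦ -i` its commutator with `μ` is `μ²`, and
otherwise `a ≠ 0` and `g` times the inverse of its conjugate by `στ : (i,j)_δ ↦ (-i,j)_{δ+1}` is
`μ^{2a}`; as `p` is odd these powers generate `⟨μ⟩`. Symmetrically with `ν`, using `σ`. Hence `L`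
contains `μ` or `ν`. If it contains both, the `L`-orbits are unions of the two layers `δ = 0, 1`.
If it contains `μ` but not `ν`, then `L` fixes `j`, and its orbits are the fibres of `j` (giving
`C_q`) when some element of `L` flips `δ`, and of `(δ, j) ∈ ℤ₂ × ℤ_q ≅ ℤ_{2q}` (giving `C_{2q}`)
otherwise. -/

section NormalQuotient

variable {L : Subgroup (Equiv.Perm V)}

def fiberPreserving (f : V → W) : Subgroup (Equiv.Perm V) where
  carrier := {g | ∀ x, f (g x) = f x}
  one_mem' _ := rfl
  mul_mem' hg hh x := (hg _).trans (hh x)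
  inv_mem' {g} hg x := by simpa using (hg (g⁻¹ x)).symm

lemma orbitSetoid_apply_left {g : Equiv.Perm V} (hg : g ∈ L) (x : V) : orbitSetoid L (g x) x :=
  MulAction.mem_orbit x (⟨g, hg⟩ : L)

lemma orbitSetoid_iff_of_fibers {f : V → W} (hL : L ≤ fiberPreserving f)
    (hjoin : ∀ x y, f x = f y → orbitSetoid L x y) {x y : V} :
    orbitSetoid L x y ↔ f x = f y := by
  refine ⟨?_, hjoin x y⟩
  rintro ⟨⟨g, hg⟩, rfl⟩
  exact hL hg y

lemma card_quotient_orbitSetoid_le [Finite W] {f : V → W} (hf : Function.Surjective f)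
    (hjoin : ∀ x y, f x = f y → orbitSetoid L x y) :
    Nat.card (Quotient (orbitSetoid L)) ≤ Nat.card W := by
  refine Nat.card_le_card_of_surjective (fun w => Quotient.mk _ (Function.surjInv hf w)) ?_
  rintro ⟨x⟩
  exact ⟨f x, Quotient.sound (hjoin _ _ (Function.surjInv_eq hf _))⟩

theorem nonempty_quotientGraph_iso_cycleGraph {Γ : SimpleGraph V} {m : ℕ} (hm : 2 ≤ m)
    (f : V → ZMod m) (hL : L ≤ fiberPreserving f) (hjoin : ∀ x y, f x = f y → orbitSetoid L x y)
    (hadj : ∀ x y, Γ.Adj x y → f y = f x + 1 ∨ f y = f x - 1)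
    (hedge : ∀ z, ∃ x y, Γ.Adj x y ∧ f x = z ∧ f y = z + 1) :
    Nonempty (quotientGraph Γ L ≃g cycleGraph m) := by
  obtain ⟨n, rfl⟩ : ∃ n, m = n + 2 := ⟨m - 2, by omega⟩
  have : Fact (1 < n + 2) := ⟨by omega⟩
  have hrel := fun x y => orbitSetoid_iff_of_fibers hL hjoin (x := x) (y := y)
  have hmk : ∀ x y, Quotient.mk (orbitSetoid L) x = Quotient.mk _ y ↔ f x = f y :=
    fun x y => Quotient.eq.trans (hrel x y)
  let F : Quotient (orbitSetoid L) → ZMod (n + 2) := Quotient.lift f fun x y h => (hrel x y).1 h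
  have hF : F.Bijective := by
    refine ⟨?_, fun z => ?_⟩
    · rintro ⟨x⟩ ⟨y⟩ h
      exact (hmk x y).2 h
    · obtain ⟨x, -, -, hx, -⟩ := hedge z
      exact ⟨Quotient.mk _ x, hx⟩
  refine ⟨⟨Equiv.ofBijective F hF, ?_⟩⟩
  intro a b
  induction a using Quotient.inductionOn with | h x => ?_
  induction b using Quotient.inductionOn with | h y => ?_
  change f x - f y = 1 ∨ f y - f x = 1 ↔ _
  rw [quotientGraph, fromRel_adj]
  simp only [ne_eq, hmk]
  constructor
  · rintro (h | h)
    · obtain ⟨x', y', hadj', hx', hy'⟩ := hedge (f y)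
      refine ⟨fun hxy => by simp [hxy] at h, Or.inr ⟨x', y', hx', ?_, hadj'⟩⟩
      rw [hy', ← h]; ring
    · obtain ⟨x', y', hadj', hx', hy'⟩ := hedge (f x)
      refine ⟨fun hxy => by simp [hxy] at h, Or.inl ⟨x', y', hx', ?_, hadj'⟩⟩
      rw [hy', ← h]; ring
  · rintro ⟨-, ⟨x', y', hx, hy, h⟩ | ⟨x', y', hy, hx, h⟩⟩ <;>
      rcases hadj x' y' h with h' | h' <;> rw [← hx, ← hy, h'] <;> simp

end NormalQuotient

section G2Elements

variable {p q : ℕ}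

def signedShift {R : Type*} [AddGroup R] (ε : Bool) (a : R) : Equiv.Perm R :=
  (if ε then Equiv.refl R else Equiv.neg R).trans (Equiv.addRight a)

@[simp] lemma signedShift_apply {R : Type*} [AddGroup R] (ε : Bool) (a x : R) :
    signedShift ε a x = (if ε then x else -x) + a := by
  cases ε <;> rfl

def g2Perm (p q : ℕ) (a : ZMod p) (b : ZMod q) (ε η : Bool) :
    Equiv.Perm ((ZMod p × ZMod q) × ZMod 2) :=
  ((signedShift ε a).prodCongr (signedShift η b)).prodCongr
    (Equiv.addRight (if ε = η then 0 else 1))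

@[simp] lemma g2Perm_apply (a : ZMod p) (b : ZMod q) (ε η : Bool)
    (x : (ZMod p × ZMod q) × ZMod 2) :
    g2Perm p q a b ε η x =
      (((if ε then x.1.1 else -x.1.1) + a, (if η then x.1.2 else -x.1.2) + b),
        x.2 + if ε = η then 0 else 1) := by
  simp [g2Perm, Prod.map]

lemma g2Perm_mul (a a' : ZMod p) (b b' : ZMod q) (ε ε' η η' : Bool) :
    g2Perm p q a' b' ε' η' * g2Perm p q a b ε η =
      g2Perm p q ((if ε' then a else -a) + a') ((if η' then b else -b) + b') (ε == ε')
        (η == η') := by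
  ext x <;> cases ε <;> cases ε' <;> cases η <;> cases η' <;>
    simp [add_assoc, show (1 : ZMod 2) + 1 = 0 from rfl] <;> ring

lemma g2Perm_one : g2Perm p q 0 0 true true = 1 := by
  ext x <;> simp

lemma g2Perm_inv (a : ZMod p) (b : ZMod q) (ε η : Bool) :
    (g2Perm p q a b ε η)⁻¹ =
      g2Perm p q (-(if ε then a else -a)) (-(if η then b else -b)) ε η := by
  rw [inv_eq_iff_mul_eq_one, g2Perm_mul, ← g2Perm_one]
  cases ε <;> cases η <;> simp

lemma g2Perm_translation_pow (a : ZMod p) (b : ZMod q) (n : ℕ) :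
    g2Perm p q a b true true ^ n = g2Perm p q (n • a) (n • b) true true := by
  induction n with
  | zero => simp [g2Perm_one]
  | succ n ih => simp [pow_succ', ih, g2Perm_mul, add_one_mul]

lemma muD_eq : muD p q = g2Perm p q 1 0 true true := by
  ext x <;> simp [muD, mu, Prod.map]

lemma nuD_eq : nuD p q = g2Perm p q 0 1 true true := by
  ext x <;> simp [nuD, nu, Prod.map]

lemma sigmaD_eq : sigmaD p q = g2Perm p q 0 0 true false := by
  ext x <;> simp [sigmaD, Prod.map]

lemma tauD_eq : tauD p q = g2Perm p q 0 0 false false := by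
  ext x <;> simp [tauD, tau, Prod.map]

lemma muD_pow_apply (n : ℕ) (x : (ZMod p × ZMod q) × ZMod 2) :
    (muD p q ^ n) x = ((x.1.1 + n, x.1.2), x.2) := by
  simp [muD_eq, g2Perm_translation_pow]

lemma nuD_pow_apply (n : ℕ) (x : (ZMod p × ZMod q) × ZMod 2) :
    (nuD p q ^ n) x = ((x.1.1, x.1.2 + n), x.2) := by
  simp [nuD_eq, g2Perm_translation_pow]

lemma exists_eq_g2Perm_of_mem {g : Equiv.Perm ((ZMod p × ZMod q) × ZMod 2)}
    (hg : g ∈ G2group p q) : ∃ a b ε η, g = g2Perm p q a b ε η := by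
  induction hg using Subgroup.closure_induction with
  | mem g hg =>
    simp only [Set.mem_insert_iff, Set.mem_singleton_iff] at hg
    rcases hg with rfl | rfl | rfl | rfl
    exacts [⟨_, _, _, _, muD_eq⟩, ⟨_, _, _, _, nuD_eq⟩, ⟨_, _, _, _, sigmaD_eq⟩,
      ⟨_, _, _, _, tauD_eq⟩]
  | one => exact ⟨0, 0, true, true, g2Perm_one.symm⟩
  | mul g h _ _ hg hh =>
    obtain ⟨a, b, ε, η, rfl⟩ := hg
    obtain ⟨a', b', ε', η', rfl⟩ := hh
    exact ⟨_, _, _, _, g2Perm_mul ..⟩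
  | inv g _ hg =>
    obtain ⟨a, b, ε, η, rfl⟩ := hg
    exact ⟨_, _, _, _, g2Perm_inv ..⟩

end G2Elements

section NormalSubgroups

variable {p q : ℕ} {L : Subgroup (Equiv.Perm ((ZMod p × ZMod q) × ZMod 2))}

lemma add_self_ne_zero_zmod {r : ℕ} [Fact r.Prime] (hr : r ≠ 2) {a : ZMod r} (ha : a ≠ 0) :
    a + a ≠ 0 := by
  rw [← two_mul]
  exact mul_ne_zero (Ring.two_ne_zero (by rwa [ZMod.ringChar_zmod_n])) ha

lemma muD_mem_G2group : muD p q ∈ G2group p q := Subgroup.subset_closure (by simp)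
lemma nuD_mem_G2group : nuD p q ∈ G2group p q := Subgroup.subset_closure (by simp)
lemma sigmaD_mem_G2group : sigmaD p q ∈ G2group p q := Subgroup.subset_closure (by simp)
lemma tauD_mem_G2group : tauD p q ∈ G2group p q := Subgroup.subset_closure (by simp)

lemma muD_mem_of_translation_mem [Fact p.Prime] {a : ZMod p} (ha : a ≠ 0)
    (h : g2Perm p q a 0 true true ∈ L) : muD p q ∈ L := by
  have h' := pow_mem h (a⁻¹).val
  rwa [g2Perm_translation_pow, nsmul_eq_mul, ZMod.natCast_zmod_val, inv_mul_cancel₀ ha,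
    smul_zero, ← muD_eq] at h'

lemma nuD_mem_of_translation_mem [Fact q.Prime] {b : ZMod q} (hb : b ≠ 0)
    (h : g2Perm p q 0 b true true ∈ L) : nuD p q ∈ L := by
  have h' := pow_mem h (b⁻¹).val
  rwa [g2Perm_translation_pow, smul_zero, nsmul_eq_mul, ZMod.natCast_zmod_val,
    inv_mul_cancel₀ hb, ← nuD_eq] at h'

lemma eq_true_and_eq_zero_of_muD_notMem [Fact p.Prime] (hp : p ≠ 2)
    (hL : NormalIn L (G2group p q)) (hμ : muD p q ∉ L) {a : ZMod p} {b : ZMod q} {ε η : Bool}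
    (hg : g2Perm p q a b ε η ∈ L) : ε = true ∧ a = 0 := by
  by_contra hne
  apply hμ
  by_cases ha : a = 0
  · subst ha
    obtain rfl : ε = false := by simpa using hne
    have hcomm : muD p q * g2Perm p q 0 b false η * (muD p q)⁻¹ * (g2Perm p q 0 b false η)⁻¹ =
        g2Perm p q (1 + 1) 0 true true := by
      rw [muD_eq]; cases η <;> simp [g2Perm_inv, g2Perm_mul]
    have h := mul_mem (hL.2 _ muD_mem_G2group _ hg) (inv_mem hg)
    rw [hcomm] at h
    exact muD_mem_of_translation_mem (add_self_ne_zero_zmod hp one_ne_zero) h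
  · have hστ : sigmaD p q * tauD p q ∈ G2group p q := mul_mem sigmaD_mem_G2group tauD_mem_G2group
    have hdiv : g2Perm p q a b ε η * (sigmaD p q * tauD p q * g2Perm p q a b ε η *
        (sigmaD p q * tauD p q)⁻¹)⁻¹ = g2Perm p q (a + a) 0 true true := by
      rw [sigmaD_eq, tauD_eq]; cases ε <;> cases η <;> simp [g2Perm_inv, g2Perm_mul]
    have h := mul_mem hg (inv_mem (hL.2 _ hστ _ hg))
    rw [hdiv] at h
    exact muD_mem_of_translation_mem (add_self_ne_zero_zmod hp ha) h

lemma eq_true_and_eq_zero_of_nuD_notMem [Fact q.Prime] (hq : q ≠ 2)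
    (hL : NormalIn L (G2group p q)) (hν : nuD p q ∉ L) {a : ZMod p} {b : ZMod q} {ε η : Bool}
    (hg : g2Perm p q a b ε η ∈ L) : η = true ∧ b = 0 := by
  by_contra hne
  apply hν
  by_cases hb : b = 0
  · subst hb
    obtain rfl : η = false := by simpa using hne
    have hcomm : nuD p q * g2Perm p q a 0 ε false * (nuD p q)⁻¹ * (g2Perm p q a 0 ε false)⁻¹ =
        g2Perm p q 0 (1 + 1) true true := by
      rw [nuD_eq]; cases ε <;> simp [g2Perm_inv, g2Perm_mul]
    have h := mul_mem (hL.2 _ nuD_mem_G2group _ hg) (inv_mem hg)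
    rw [hcomm] at h
    exact nuD_mem_of_translation_mem (add_self_ne_zero_zmod hq one_ne_zero) h
  · have hdiv : g2Perm p q a b ε η * (sigmaD p q * g2Perm p q a b ε η * (sigmaD p q)⁻¹)⁻¹ =
        g2Perm p q 0 (b + b) true true := by
      rw [sigmaD_eq]; cases ε <;> cases η <;> simp [g2Perm_inv, g2Perm_mul]
    have h := mul_mem hg (inv_mem (hL.2 _ sigmaD_mem_G2group _ hg))
    rw [hdiv] at h
    exact nuD_mem_of_translation_mem (add_self_ne_zero_zmod hq hb) h

end NormalSubgroups

section Quotients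

variable {p q : ℕ} {L : Subgroup (Equiv.Perm ((ZMod p × ZMod q) × ZMod 2))}

lemma eq_add_one_iff_ne_zmod_two {u v : ZMod 2} : u = v + 1 ↔ u ≠ v := by
  revert u v; decide

lemma gamma2_adj_iff {x y : (ZMod p × ZMod q) × ZMod 2} :
    (Gamma2 p q).Adj x y ↔ gamma2Rel p q x y := by
  rw [Gamma2, fromRel_adj]
  constructor
  · rintro ⟨-, h | ⟨hi, hj, hδ⟩⟩
    · exact h
    · refine ⟨?_, ?_, eq_add_one_iff_ne_zmod_two.2 (eq_add_one_iff_ne_zmod_two.1 hδ).symm⟩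
      · rcases hi with h | h <;> [right; left] <;> rw [h] <;> ring
      · rcases hj with h | h <;> [right; left] <;> rw [h] <;> ring
  · intro h
    exact ⟨fun hxy => eq_add_one_iff_ne_zmod_two.1 h.2.2 (by rw [hxy]), Or.inl h⟩

lemma orbitSetoid_of_snd_eq [NeZero p] (hμ : muD p q ∈ L) {x y : (ZMod p × ZMod q) × ZMod 2}
    (hj : x.1.2 = y.1.2) (hδ : x.2 = y.2) : orbitSetoid L x y := by
  have h : (muD p q ^ (x.1.1 - y.1.1).val) y = x := by
    rw [muD_pow_apply, ZMod.natCast_zmod_val, add_sub_cancel, ← hj, ← hδ]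
  exact h ▸ orbitSetoid_apply_left (pow_mem hμ _) y

lemma orbitSetoid_of_fst_eq [NeZero q] (hν : nuD p q ∈ L) {x y : (ZMod p × ZMod q) × ZMod 2}
    (hi : x.1.1 = y.1.1) (hδ : x.2 = y.2) : orbitSetoid L x y := by
  have h : (nuD p q ^ (x.1.2 - y.1.2).val) y = x := by
    rw [nuD_pow_apply, ZMod.natCast_zmod_val, add_sub_cancel, ← hi, ← hδ]
  exact h ▸ orbitSetoid_apply_left (pow_mem hν _) y

lemma card_quotient_orbitSetoid_le_two [NeZero p] [NeZero q] (hμ : muD p q ∈ L)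
    (hν : nuD p q ∈ L) : Nat.card (Quotient (orbitSetoid L)) ≤ 2 := by
  simpa using card_quotient_orbitSetoid_le Prod.snd_surjective fun x y hδ =>
    (orbitSetoid L).iseqv.trans (orbitSetoid_of_snd_eq (y := ((y.1.1, x.1.2), x.2)) hμ rfl rfl)
      (orbitSetoid_of_fst_eq hν rfl hδ)

lemma nonempty_quotientGraph_iso_cycleGraph_two_mul_right [NeZero p] (hq : Odd q)
    (hμ : muD p q ∈ L)
    (hL : L ≤ fiberPreserving fun x : (ZMod p × ZMod q) × ZMod 2 => (x.2, x.1.2)) :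
    Nonempty (quotientGraph (Gamma2 p q) L ≃g cycleGraph (2 * q)) := by
  set e := (ZMod.chineseRemainder hq.coprime_two_left).symm
  refine nonempty_quotientGraph_iso_cycleGraph (by have := hq.pos; omega)
    (fun x => e (x.2, x.1.2)) (fun g hg x => congrArg e (hL hg x)) (fun x y hxy => ?_)
    (fun x y hxy => ?_) (fun z => ?_)
  · obtain ⟨hδ, hj⟩ := Prod.ext_iff.1 (e.injective hxy)
    exact orbitSetoid_of_snd_eq hμ hj hδ
  · obtain ⟨-, hj | hj, hδ⟩ := gamma2_adj_iff.1 hxy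
    · left
      rw [hδ, hj, ← map_one e, ← map_add]
      rfl
    · right
      rw [hδ, hj, ← CharTwo.sub_eq_add, ← map_one e, ← map_sub]
      rfl
  · obtain ⟨⟨d, j⟩, rfl⟩ := e.surjective z
    refine ⟨((0, j), d), ((1, j + 1), d + 1),
      gamma2_adj_iff.2 ⟨Or.inl (zero_add 1).symm, Or.inl rfl, rfl⟩, rfl, ?_⟩
    change e (d + 1, j + 1) = e (d, j) + 1
    rw [← map_one e, ← map_add]
    rfl

lemma nonempty_quotientGraph_iso_cycleGraph_right [NeZero p] (hq : 2 ≤ q) (hμ : muD p q ∈ L)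
    (hL : L ≤ fiberPreserving fun x : (ZMod p × ZMod q) × ZMod 2 => x.1.2)
    {g : Equiv.Perm ((ZMod p × ZMod q) × ZMod 2)} (hg : g ∈ L) (hflip : ∀ x, (g x).2 = x.2 + 1) :
    Nonempty (quotientGraph (Gamma2 p q) L ≃g cycleGraph q) := by
  refine nonempty_quotientGraph_iso_cycleGraph hq (fun x => x.1.2) hL (fun x y hj => ?_)
    (fun x y hxy => (gamma2_adj_iff.1 hxy).2.1) (fun z => ⟨((0, z), 0), ((1, z + 1), 1),
      gamma2_adj_iff.2 ⟨Or.inl (zero_add 1).symm, Or.inl rfl, rfl⟩, rfl, rfl⟩)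
  by_cases hδ : x.2 = y.2
  · exact orbitSetoid_of_snd_eq hμ hj hδ
  · have hgy : x.2 = (g y).2 := by rw [hflip, eq_add_one_iff_ne_zmod_two.2 hδ]
    exact (orbitSetoid L).iseqv.trans (orbitSetoid_of_snd_eq hμ (hj.trans (hL hg y).symm) hgy)
      (orbitSetoid_apply_left hg y)

lemma nonempty_quotientGraph_iso_cycleGraph_two_mul_left [NeZero q] (hp : Odd p)
    (hν : nuD p q ∈ L)
    (hL : L ≤ fiberPreserving fun x : (ZMod p × ZMod q) × ZMod 2 => (x.2, x.1.1)) :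
    Nonempty (quotientGraph (Gamma2 p q) L ≃g cycleGraph (2 * p)) := by
  set e := (ZMod.chineseRemainder hp.coprime_two_left).symm
  refine nonempty_quotientGraph_iso_cycleGraph (by have := hp.pos; omega)
    (fun x => e (x.2, x.1.1)) (fun g hg x => congrArg e (hL hg x)) (fun x y hxy => ?_)
    (fun x y hxy => ?_) (fun z => ?_)
  · obtain ⟨hδ, hi⟩ := Prod.ext_iff.1 (e.injective hxy)
    exact orbitSetoid_of_fst_eq hν hi hδ
  · obtain ⟨hi | hi, -, hδ⟩ := gamma2_adj_iff.1 hxy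
    · left
      rw [hδ, hi, ← map_one e, ← map_add]
      rfl
    · right
      rw [hδ, hi, ← CharTwo.sub_eq_add, ← map_one e, ← map_sub]
      rfl
  · obtain ⟨⟨d, i⟩, rfl⟩ := e.surjective z
    refine ⟨((i, 0), d), ((i + 1, 1), d + 1),
      gamma2_adj_iff.2 ⟨Or.inl rfl, Or.inl (zero_add 1).symm, rfl⟩, rfl, ?_⟩
    change e (d + 1, i + 1) = e (d, i) + 1
    rw [← map_one e, ← map_add]
    rfl

lemma nonempty_quotientGraph_iso_cycleGraph_left [NeZero q] (hp : 2 ≤ p) (hν : nuD p q ∈ L)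
    (hL : L ≤ fiberPreserving fun x : (ZMod p × ZMod q) × ZMod 2 => x.1.1)
    {g : Equiv.Perm ((ZMod p × ZMod q) × ZMod 2)} (hg : g ∈ L) (hflip : ∀ x, (g x).2 = x.2 + 1) :
    Nonempty (quotientGraph (Gamma2 p q) L ≃g cycleGraph p) := by
  refine nonempty_quotientGraph_iso_cycleGraph hp (fun x => x.1.1) hL (fun x y hi => ?_)
    (fun x y hxy => (gamma2_adj_iff.1 hxy).1) (fun z => ⟨((z, 0), 0), ((z + 1, 1), 1),
      gamma2_adj_iff.2 ⟨Or.inl rfl, Or.inl (zero_add 1).symm, rfl⟩, rfl, rfl⟩)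
  by_cases hδ : x.2 = y.2
  · exact orbitSetoid_of_fst_eq hν hi hδ
  · have hgy : x.2 = (g y).2 := by rw [hflip, eq_add_one_iff_ne_zmod_two.2 hδ]
    exact (orbitSetoid L).iseqv.trans (orbitSetoid_of_fst_eq hν (hi.trans (hL hg y).symm) hgy)
      (orbitSetoid_apply_left hg y)

end Quotients

section Classification

variable {p q : ℕ} {L : Subgroup (Equiv.Perm ((ZMod p × ZMod q) × ZMod 2))}

lemma isoCycle_of_muD_mem_of_nuD_notMem [Fact p.Prime] [Fact q.Prime] (hq : Odd q)
    (hL : NormalIn L (G2group p q)) (hμ : muD p q ∈ L) (hν : nuD p q ∉ L) :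
    IsoCycle (quotientGraph (Gamma2 p q) L) := by
  have hq2 : q ≠ 2 := hq.ne_two_of_dvd_nat dvd_rfl
  have hq3 : 3 ≤ q := by have := (Fact.out : q.Prime).two_le; omega
  have hshape : ∀ g ∈ L, ∃ a ε, g = g2Perm p q a 0 ε true := by
    intro g hg
    obtain ⟨a, b, ε, η, rfl⟩ := exists_eq_g2Perm_of_mem (hL.1 hg)
    obtain ⟨rfl, rfl⟩ := eq_true_and_eq_zero_of_nuD_notMem hq2 hL hν hg
    exact ⟨a, ε, rfl⟩
  by_cases hflip : ∃ a, g2Perm p q a 0 false true ∈ L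
  · obtain ⟨a, hg⟩ := hflip
    refine ⟨q, hq3, nonempty_quotientGraph_iso_cycleGraph_right (by omega) hμ ?_ hg (by simp)⟩
    intro g hg x
    obtain ⟨a, ε, rfl⟩ := hshape g hg
    simp
  · refine ⟨2 * q, by omega, nonempty_quotientGraph_iso_cycleGraph_two_mul_right hq hμ ?_⟩
    intro g hg x
    obtain ⟨a, ε, rfl⟩ := hshape g hg
    cases ε
    · exact absurd ⟨a, hg⟩ hflip
    · simp

lemma isoCycle_of_nuD_mem_of_muD_notMem [Fact p.Prime] [Fact q.Prime] (hp : Odd p)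
    (hL : NormalIn L (G2group p q)) (hν : nuD p q ∈ L) (hμ : muD p q ∉ L) :
    IsoCycle (quotientGraph (Gamma2 p q) L) := by
  have hp2 : p ≠ 2 := hp.ne_two_of_dvd_nat dvd_rfl
  have hp3 : 3 ≤ p := by have := (Fact.out : p.Prime).two_le; omega
  have hshape : ∀ g ∈ L, ∃ b η, g = g2Perm p q 0 b true η := by
    intro g hg
    obtain ⟨a, b, ε, η, rfl⟩ := exists_eq_g2Perm_of_mem (hL.1 hg)
    obtain ⟨rfl, rfl⟩ := eq_true_and_eq_zero_of_muD_notMem hp2 hL hμ hg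
    exact ⟨b, η, rfl⟩
  by_cases hflip : ∃ b, g2Perm p q 0 b true false ∈ L
  · obtain ⟨b, hg⟩ := hflip
    refine ⟨p, hp3, nonempty_quotientGraph_iso_cycleGraph_left (by omega) hν ?_ hg (by simp)⟩
    intro g hg x
    obtain ⟨b, η, rfl⟩ := hshape g hg
    simp
  · refine ⟨2 * p, by omega, nonempty_quotientGraph_iso_cycleGraph_two_mul_left hp hν ?_⟩
    intro g hg x
    obtain ⟨b, η, rfl⟩ := hshape g hg
    cases η
    · exact absurd ⟨b, hg⟩ hflip
    · simp

lemma eq_bot_of_muD_notMem_of_nuD_notMem [Fact p.Prime] [Fact q.Prime] (hp : p ≠ 2)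
    (hq : q ≠ 2) (hL : NormalIn L (G2group p q)) (hμ : muD p q ∉ L) (hν : nuD p q ∉ L) :
    L = ⊥ := by
  refine (Subgroup.eq_bot_iff_forall L).2 fun g hg => ?_
  obtain ⟨a, b, ε, η, rfl⟩ := exists_eq_g2Perm_of_mem (hL.1 hg)
  obtain ⟨rfl, rfl⟩ := eq_true_and_eq_zero_of_muD_notMem hp hL hμ hg
  obtain ⟨rfl, rfl⟩ := eq_true_and_eq_zero_of_nuD_notMem hq hL hν hg
  exact g2Perm_one

theorem isBasic_gamma2 [Fact p.Prime] [Fact q.Prime] (hp : Odd p) (hq : Odd q) :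
    IsBasic (Gamma2 p q) (G2group p q) := by
  intro L hL hbot
  by_cases hμ : muD p q ∈ L <;> by_cases hν : nuD p q ∈ L
  · exact Or.inl (card_quotient_orbitSetoid_le_two hμ hν)
  · exact Or.inr (isoCycle_of_muD_mem_of_nuD_notMem hq hL hμ hν)
  · exact Or.inr (isoCycle_of_nuD_mem_of_muD_notMem hp hL hν hμ)
  · exact absurd (eq_bot_of_muD_notMem_of_nuD_notMem (hp.ne_two_of_dvd_nat dvd_rfl)
      (hq.ne_two_of_dvd_nat dvd_rfl) hL hμ hν) hbot

lemma normalIn_closure_muD : NormalIn (Subgroup.closure {muD p q}) (G2group p q) := by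
  refine ⟨(Subgroup.closure_le _).2 (Set.singleton_subset_iff.2 muD_mem_G2group),
    fun h hh n hn => ?_⟩
  obtain ⟨a, b, ε, η, rfl⟩ := exists_eq_g2Perm_of_mem hh
  suffices Subgroup.closure {muD p q} ≤ (Subgroup.closure {muD p q}).comap
      (MulAut.conj (g2Perm p q a b ε η)).toMonoidHom from this hn
  rw [Subgroup.closure_le, Set.singleton_subset_iff, SetLike.mem_coe, Subgroup.mem_comap]
  change g2Perm p q a b ε η * muD p q * (g2Perm p q a b ε η)⁻¹ ∈ _
  have hμ := Subgroup.subset_closure (Set.mem_singleton (muD p q))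
  cases ε
  · convert inv_mem hμ using 1
    rw [muD_eq]; cases η <;> simp [g2Perm_inv, g2Perm_mul]
  · convert hμ using 1
    rw [muD_eq]; cases η <;> simp [g2Perm_inv, g2Perm_mul]

lemma closure_muD_le_fiberPreserving :
    Subgroup.closure {muD p q} ≤
      fiberPreserving fun x : (ZMod p × ZMod q) × ZMod 2 => (x.2, x.1.2) :=
  (Subgroup.closure_le _).2 (Set.singleton_subset_iff.2 fun x => by simp [muD_eq])

lemma closure_nuD_le_fiberPreserving :
    Subgroup.closure {nuD p q} ≤
      fiberPreserving fun x : (ZMod p × ZMod q) × ZMod 2 => (x.2, x.1.1) :=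
  (Subgroup.closure_le _).2 (Set.singleton_subset_iff.2 fun x => by simp [nuD_eq])

lemma closure_muD_ne_bot [Fact (1 < p)] : Subgroup.closure {muD p q} ≠ ⊥ := by
  rw [Ne, Subgroup.closure_eq_bot_iff, Set.singleton_subset_iff, Set.mem_singleton_iff]
  intro h
  simpa [muD_eq] using congrArg (fun g => (g ((0, 0), 0)).1.1) h

end Classification

/-- for odd primes `p`, `q`, every normal quotient of `(Γ₂(p,q), G₂(p,q))` by a
nontrivial normal subgroup is degenerate, the quotient by `⟨μ⟩` is `C_{2q}`, the quotient by
`⟨ν⟩` is `C_{2p}`, and the pair is basic of cycle type. -/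
theorem stmt9 (p q : ℕ) (hp : p.Prime) (hpo : Odd p) (hq : q.Prime) (hqo : Odd q) :
    (∀ L : Subgroup (Equiv.Perm ((ZMod p × ZMod q) × ZMod 2)),
      NormalIn L (G2group p q) → L ≠ ⊥ →
      Nat.card (Quotient (orbitSetoid L)) ≤ 2 ∨ IsoCycle (quotientGraph (Gamma2 p q) L)) ∧
    Nonempty (quotientGraph (Gamma2 p q) (Subgroup.closure {muD p q}) ≃g
      SimpleGraph.cycleGraph (2 * q)) ∧
    Nonempty (quotientGraph (Gamma2 p q) (Subgroup.closure {nuD p q}) ≃g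
      SimpleGraph.cycleGraph (2 * p)) ∧
    BasicOfCycleType (Gamma2 p q) (G2group p q) := by
  have : Fact p.Prime := ⟨hp⟩
  have : Fact q.Prime := ⟨hq⟩
  have hbasic := isBasic_gamma2 hpo hqo
  have hμ : Nonempty (quotientGraph (Gamma2 p q) (Subgroup.closure {muD p q}) ≃g
      cycleGraph (2 * q)) :=
    nonempty_quotientGraph_iso_cycleGraph_two_mul_right hqo (Subgroup.subset_closure rfl)
      closure_muD_le_fiberPreserving
  have hν : Nonempty (quotientGraph (Gamma2 p q) (Subgroup.closure {nuD p q}) ≃g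
      cycleGraph (2 * p)) :=
    nonempty_quotientGraph_iso_cycleGraph_two_mul_left hpo (Subgroup.subset_closure rfl)
      closure_nuD_le_fiberPreserving
  exact ⟨hbasic, hμ, hν, hbasic, _, normalIn_closure_muD, closure_muD_ne_bot, 2 * q,
    by have := hq.two_le; omega, hμ⟩

end OG4
end
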